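/- Let n ≥ 1 be an integer and ω : ℝ → ℂ a continuous 2π-periodic function; write ω̂(m) := ∫₀^{2π} ω(α) e^{−imα} dα for m ∈ ℤ. Then for every z ∈ ℂ, ∫₀^{2π} ω(α) · (|z|² + 1 − conj(z)·e^{iα} − z·e^{−iα})^{n−1} dα = Σ_{p=0}^{n−1} Σ_{q=0}^{n−1} (−1)^{p+q} · C(n−1,p) · C(n−1,q) · ω̂(p−q) · z^p · conj(z)^q, where C(·,·) denotes binomial coefficients. (In particular, (1−|z|²)^{n−1} · 𝒫_{−n}(ω)(z) is a polynomial in z and conj(z) of bidegree at most (n−1, n−1) whose coefficients are the Fourier coefficients ω̂(m) with |m| ≤ n−1, up to nonzero binomial constants.) -/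

import Mathlib

open Complex Real

/-- The `m`-th Fourier coefficient `ω̂(m) = ∫₀^{2π} ω(α) e^{−imα} dα`. -/
noncomputable def fourierCoeffInt (ω : ℝ → ℂ) (m : ℤ) : ℂ :=
  ∫ α in (0 : ℝ)..(2 * Real.pi), ω α * Complex.exp (-(m : ℂ) * α * Complex.I)

/-- The integral `∫₀^{2π} ω(α) (|z|² + 1 − conj z·e^{iα} − z·e^{−iα})^{n−1} dα`, i.e.
`(1−|z|²)^{n−1} 𝒫_{−n}(ω)(z)`. -/
noncomputable def poissonInt (n : ℕ) (ω : ℝ → ℂ) (z : ℂ) : ℂ :=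
  ∫ α in (0 : ℝ)..(2 * Real.pi),
    ω α * (((‖z‖ ^ 2 : ℝ) : ℂ) + 1 - (starRingEnd ℂ) z * Complex.exp (α * Complex.I)
            - z * Complex.exp (-(α * Complex.I))) ^ (n - 1)

/-!
Since `e^{iα} e^{−iα} = 1` and `|z|² = z z̄`, the kernel factors as
`(1 − z e^{−iα}) (1 − z̄ e^{iα})`. Expanding both factors of its `(n−1)`-st power by the binomial
theorem writes it as a trigonometric polynomial in `α` whose `e^{−i(p−q)α}` coefficient is
`(−1)^{p+q} C(n−1,p) C(n−1,q) z^p z̄^q`; integrating `ω` against it term by term produces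
`ω̂(p − q)` in place of each exponential.
-/

open Finset

section Algebra

variable {R : Type*} [CommRing R]

theorem one_sub_pow_eq_sum (w : R) (m : ℕ) :
    (1 - w) ^ m = ∑ k ∈ range (m + 1), (-1) ^ k * (m.choose k : R) * w ^ k := by
  rw [sub_eq_add_neg, add_comm, add_pow]
  refine sum_congr rfl fun k _ => ?_
  rw [one_pow, neg_pow]
  ring

theorem one_sub_mul_one_sub_pow_eq_sum (a b : R) (m : ℕ) :
    ((1 - a) * (1 - b)) ^ m = ∑ p ∈ range (m + 1), ∑ q ∈ range (m + 1),
      (-1) ^ (p + q) * (m.choose p : R) * (m.choose q : R) * a ^ p * b ^ q := by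
  rw [mul_pow, one_sub_pow_eq_sum, one_sub_pow_eq_sum, sum_mul_sum]
  refine sum_congr rfl fun p _ => sum_congr rfl fun q _ => ?_
  ring

theorem mul_add_one_sub_sub_eq_mul_one_sub {u v : R} (huv : u * v = 1) (a b : R) :
    a * b + 1 - b * u - a * v = (1 - a * v) * (1 - b * u) := by
  linear_combination (-(a * b)) * huv

end Algebra

theorem ofReal_norm_sq_add_one_sub_sub_eq_mul (z : ℂ) (α : ℝ) :
    ((‖z‖ ^ 2 : ℝ) : ℂ) + 1 - (starRingEnd ℂ) z * exp (α * I) - z * exp (-(α * I))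
      = (1 - z * exp (-(α * I))) * (1 - (starRingEnd ℂ) z * exp (α * I)) := by
  have hexp : exp (α * I) * exp (-(α * I)) = 1 := by
    rw [← Complex.exp_add, add_neg_cancel, Complex.exp_zero]
  push_cast
  rw [← mul_conj', mul_add_one_sub_sub_eq_mul_one_sub hexp]

theorem exp_neg_pow_mul_exp_pow (α : ℝ) (p q : ℕ) :
    exp (-(α * I)) ^ p * exp (α * I) ^ q = exp (-(((p : ℤ) - q : ℤ) : ℂ) * α * I) := by
  rw [← Complex.exp_nat_mul, ← Complex.exp_nat_mul, ← Complex.exp_add]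
  push_cast
  ring_nf

theorem poissonKernel_pow_eq_sum (m : ℕ) (z : ℂ) (α : ℝ) :
    (((‖z‖ ^ 2 : ℝ) : ℂ) + 1 - (starRingEnd ℂ) z * exp (α * I) - z * exp (-(α * I))) ^ m
      = ∑ pq ∈ range (m + 1) ×ˢ range (m + 1),
          (-1) ^ (pq.1 + pq.2) * (m.choose pq.1 : ℂ) * (m.choose pq.2 : ℂ)
            * z ^ pq.1 * (starRingEnd ℂ) z ^ pq.2
            * exp (-(((pq.1 : ℤ) - pq.2 : ℤ) : ℂ) * α * I) := by
  rw [ofReal_norm_sq_add_one_sub_sub_eq_mul, one_sub_mul_one_sub_pow_eq_sum, sum_product]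
  refine sum_congr rfl fun p _ => sum_congr rfl fun q _ => ?_
  rw [← exp_neg_pow_mul_exp_pow]
  ring

theorem integral_mul_trigPolynomial_eq_sum_fourierCoeffInt {ω : ℝ → ℂ}
    (hω : IntervalIntegrable ω MeasureTheory.volume 0 (2 * π)) {ι : Type*} (s : Finset ι)
    (c : ι → ℂ) (m : ι → ℤ) :
    ∫ α in (0 : ℝ)..(2 * π), ω α * ∑ i ∈ s, c i * exp (-(m i : ℂ) * α * I)
      = ∑ i ∈ s, c i * fourierCoeffInt ω (m i) := by
  have hint : ∀ i ∈ s, IntervalIntegrable (fun α : ℝ => c i * (ω α * exp (-(m i : ℂ) * α * I)))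
      MeasureTheory.volume 0 (2 * π) :=
    fun i _ => (hω.mul_continuousOn (by fun_prop)).const_mul (c i)
  simp_rw [mul_sum, mul_left_comm (ω _)]
  rw [intervalIntegral.integral_finsetSum hint]
  simp only [intervalIntegral.integral_const_mul, fourierCoeffInt]

theorem poissonInt_eq_fourier_expansion_general (n : ℕ) (hn : 1 ≤ n) (ω : ℝ → ℂ)
    (hcont : Continuous ω) :
    ∀ z : ℂ, poissonInt n ω z
      = ∑ p ∈ Finset.range n, ∑ q ∈ Finset.range n,
          (-1 : ℂ) ^ (p + q) * ((n - 1).choose p : ℂ) * ((n - 1).choose q : ℂ)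
            * fourierCoeffInt ω ((p : ℤ) - (q : ℤ)) * z ^ p * ((starRingEnd ℂ) z) ^ q := by
  intro z
  obtain ⟨m, rfl⟩ : ∃ m, n = m + 1 := ⟨n - 1, by omega⟩
  simp only [poissonInt, add_tsub_cancel_right, poissonKernel_pow_eq_sum]
  rw [integral_mul_trigPolynomial_eq_sum_fourierCoeffInt (hcont.intervalIntegrable _ _),
    sum_product]
  refine sum_congr rfl fun p _ => sum_congr rfl fun q _ => ?_
  ring

theorem poissonInt_eq_fourier_expansion (n : ℕ) (hn : 1 ≤ n) (ω : ℝ → ℂ)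
    (hcont : Continuous ω) (hper : ∀ α : ℝ, ω (α + 2 * Real.pi) = ω α) :
    ∀ z : ℂ, poissonInt n ω z
      = ∑ p ∈ Finset.range n, ∑ q ∈ Finset.range n,
          (-1 : ℂ) ^ (p + q) * ((n - 1).choose p : ℂ) * ((n - 1).choose q : ℂ)
            * fourierCoeffInt ω ((p : ℤ) - (q : ℤ)) * z ^ p * ((starRingEnd ℂ) z) ^ q :=
  poissonInt_eq_fourier_expansion_general n hn ω hcont
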